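/- arXiv:1001.2795 — 7 statements merged into one kernel-verified Lean document; each statement's English description precedes it below -/
import Mathlib

section
/- Let V be a vector space over a field, L : V → V a linear idempotent, T = id − L, and χ : V → V invertible. Suppose A : V → V is a linear map satisfying L∘A∘L = A, A∘(L∘χ∘L) = L, and (L∘χ∘L)∘A = L (i.e., A is the inverse of L∘χ∘L on the range of L). Then (T∘χ∘T − T∘χ∘A∘χ∘T)∘(T∘χ⁻¹∘T) = T and (T∘χ⁻¹∘T)∘(T∘χ∘T − T∘χ∘A∘χ∘T) = T. -/
/-! Write `T = 1 - L`. Since `A χ L = L`, the map `1 - A χ` kills the range of `L`, so the Schur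
complement `S = T χ T - T χ A χ T` factors as `T χ (1 - A χ)`; multiplying by `T χ⁻¹ T` leaves
`T - T χ A T = T`, because `A T = 0`. The other side is the mirror image, using
`S = (1 - χ A) χ T` and `T A = 0`. -/

section Ring

variable {R : Type*} [Ring R] {L χ χ' A : R}

theorem schur_complement_mul_compl_corner (hL : IsIdempotentElem L) (hχ : χ * χ' = 1)
    (hAL : A * L = A) (hAχL : A * χ * L = L) :
    ((1 - L) * χ * (1 - L) - (1 - L) * χ * A * χ * (1 - L)) * ((1 - L) * χ' * (1 - L)) =
      1 - L := by
  have hAT : A * (1 - L) = 0 := by rw [mul_sub, mul_one, hAL, sub_self]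
  have hfactor : (1 - A * χ) * (1 - L) = 1 - A * χ := by
    rw [mul_sub, mul_one, sub_mul, one_mul, hAχL, sub_self, sub_zero]
  have hS : (1 - L) * χ * (1 - L) - (1 - L) * χ * A * χ * (1 - L) =
      (1 - L) * χ * (1 - A * χ) := by
    rw [← hfactor]; noncomm_ring
  rw [hS]
  calc ((1 - L) * χ * (1 - A * χ)) * ((1 - L) * χ' * (1 - L))
      = (1 - L) * χ * ((1 - A * χ) * (1 - L)) * χ' * (1 - L) := by simp only [mul_assoc]
    _ = (1 - L) * (χ * χ') * (1 - L) - (1 - L) * χ * (A * (χ * χ') * (1 - L)) := by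
        rw [hfactor]; noncomm_ring
    _ = 1 - L := by rw [hχ, mul_one, mul_one, hAT, mul_zero, sub_zero, hL.one_sub.eq]

theorem compl_corner_mul_schur_complement (hL : IsIdempotentElem L) (hχ' : χ' * χ = 1)
    (hLA : L * A = A) (hLχA : L * χ * A = L) :
    ((1 - L) * χ' * (1 - L)) * ((1 - L) * χ * (1 - L) - (1 - L) * χ * A * χ * (1 - L)) =
      1 - L := by
  have hTA : (1 - L) * A = 0 := by rw [sub_mul, one_mul, hLA, sub_self]
  have hfactor : (1 - L) * (1 - χ * A) = 1 - χ * A := by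
    rw [sub_mul, one_mul, mul_sub, mul_one, ← mul_assoc, hLχA, sub_self, sub_zero]
  have hS : (1 - L) * χ * (1 - L) - (1 - L) * χ * A * χ * (1 - L) =
      (1 - χ * A) * χ * (1 - L) := by
    rw [← hfactor]; noncomm_ring
  rw [hS]
  calc ((1 - L) * χ' * (1 - L)) * ((1 - χ * A) * χ * (1 - L))
      = (1 - L) * χ' * ((1 - L) * (1 - χ * A)) * χ * (1 - L) := by simp only [mul_assoc]
    _ = (1 - L) * (χ' * χ) * (1 - L) - (1 - L) * (χ' * χ) * A * χ * (1 - L) := by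
        rw [hfactor]; noncomm_ring
    _ = 1 - L := by
        rw [hχ', mul_one, hTA, zero_mul, zero_mul, sub_zero, hL.one_sub.eq]

end Ring

/-- If `L` is a linear idempotent, `T = id - L`, `χ` invertible (inverse `χ'`),
and `A` is the inverse of `L∘χ∘L` on the range of `L`, then
`(T∘χ∘T − T∘χ∘A∘χ∘T)` and `T∘χ⁻¹∘T` are mutually inverse on the range of `T`. -/
theorem schur_complement_transverse_inverse
    {K V : Type*} [Field K] [AddCommGroup V] [Module K V]
    (L T χ χ' A : V →ₗ[K] V)
    (hL : L ∘ₗ L = L)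
    (hT : T = LinearMap.id - L)
    (hχ : χ ∘ₗ χ' = LinearMap.id) (hχ' : χ' ∘ₗ χ = LinearMap.id)
    (hA1 : L ∘ₗ A ∘ₗ L = A)
    (hA2 : A ∘ₗ (L ∘ₗ χ ∘ₗ L) = L)
    (hA3 : (L ∘ₗ χ ∘ₗ L) ∘ₗ A = L) :
    (T ∘ₗ χ ∘ₗ T - T ∘ₗ χ ∘ₗ A ∘ₗ χ ∘ₗ T) ∘ₗ (T ∘ₗ χ' ∘ₗ T) = T ∧
    (T ∘ₗ χ' ∘ₗ T) ∘ₗ (T ∘ₗ χ ∘ₗ T - T ∘ₗ χ ∘ₗ A ∘ₗ χ ∘ₗ T) = T := by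
  subst hT
  simp only [← Module.End.mul_eq_comp, ← Module.End.one_eq_id, ← mul_assoc] at *
  have hLidem : IsIdempotentElem L := hL
  have hAL : A * L = A := by rw [← hA1, mul_assoc, hL]
  have hLA : L * A = A := by rw [← hA1, mul_assoc, ← mul_assoc L L, hL]
  have hAχL : A * χ * L = L := by rwa [hAL] at hA2
  have hLχA : L * χ * A = L := by rwa [mul_assoc (L * χ), hLA] at hA3
  constructor
  · simpa only [mul_assoc] using schur_complement_mul_compl_corner hLidem hχ hAL hAχL
  · simpa only [mul_assoc] using compl_corner_mul_schur_complement hLidem hχ' hLA hLχA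
end

section
/- Let V be a vector space over a field, L : V → V a linear idempotent, T = id − L, and χ : V → V invertible. Suppose A : V → V satisfies L∘A∘L = A, A∘(L∘χ∘L) = L, and (L∘χ∘L)∘A = L. Then X := χ − χ∘A∘χ is the inverse of T∘χ⁻¹∘T on the range of T; that is, T∘X∘T = X, X∘(T∘χ⁻¹∘T) = T, and (T∘χ⁻¹∘T)∘X = T. -/
/-!
Write `l` for the longitudinal idempotent and `t = 1 - l`. The hypotheses on `A` say
`l χ A = l = A χ l` and `A = l A l`, so `X = χ - χ A χ` is killed by `l` on both sides,
i.e. `X = t X t`. Hence `X (t χ⁻¹ t) = (1 - χ A) t = t` and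
`(t χ⁻¹ t) X = t (1 - A χ) = t`, because `A t = 0 = t A`.
-/

section CornerInverse

variable {R : Type*} [Ring R] {p b b' a : R}

/-- `a` is the inverse of `p * b * p` in the corner ring `p R p`. -/
structure IsCornerInverse (p b a : R) : Prop where
  corner : p * a * p = a
  mul_corner : a * (p * b * p) = p
  corner_mul : (p * b * p) * a = p

namespace IsCornerInverse

variable (hp : IsIdempotentElem p)
include hp

theorem mul_left_eq (h : IsCornerInverse p b a) : p * a = a := by
  rw [← h.corner, ← mul_assoc, ← mul_assoc, hp.eq]

theorem mul_right_eq (h : IsCornerInverse p b a) : a * p = a := by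
  rw [← h.corner, mul_assoc, hp.eq]

theorem mul_mul_eq_left (h : IsCornerInverse p b a) : p * b * a = p := by
  simpa only [mul_assoc, h.mul_left_eq hp] using h.corner_mul

theorem mul_mul_eq_right (h : IsCornerInverse p b a) : a * b * p = p := by
  simpa only [← mul_assoc, h.mul_right_eq hp] using h.mul_corner

theorem mul_schur_eq_zero (h : IsCornerInverse p b a) : p * (b - b * a * b) = 0 := by
  rw [mul_sub, ← mul_assoc, ← mul_assoc, h.mul_mul_eq_left hp, sub_self]

theorem schur_mul_eq_zero (h : IsCornerInverse p b a) : (b - b * a * b) * p = 0 := by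
  rw [sub_mul, mul_assoc b a b, mul_assoc b, h.mul_mul_eq_right hp, sub_self]

theorem schur_complement (hb : b * b' = 1) (hb' : b' * b = 1)
    (h : IsCornerInverse p b a) : IsCornerInverse (1 - p) b' (b - b * a * b) := by
  have ha_compl : a * (1 - p) = 0 := by rw [mul_sub, mul_one, h.mul_right_eq hp, sub_self]
  have hcompl_a : (1 - p) * a = 0 := by rw [sub_mul, one_mul, h.mul_left_eq hp, sub_self]
  have hx_compl : (b - b * a * b) * (1 - p) = b - b * a * b := by
    rw [mul_sub, mul_one, h.schur_mul_eq_zero hp, sub_zero]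
  have hcompl_x : (1 - p) * (b - b * a * b) = b - b * a * b := by
    rw [sub_mul, one_mul, h.mul_schur_eq_zero hp, sub_zero]
  refine ⟨by rw [hcompl_x, hx_compl], ?_, ?_⟩
  · calc (b - b * a * b) * ((1 - p) * b' * (1 - p))
        = (b - b * a * b) * b' * (1 - p) := by simp only [← mul_assoc, hx_compl]
      _ = (1 - p) - b * (a * (1 - p)) := by
          simp only [sub_mul, mul_assoc, hb, mul_one, one_mul, mul_sub]
          abel
      _ = 1 - p := by rw [ha_compl, mul_zero, sub_zero]
  · calc ((1 - p) * b' * (1 - p)) * (b - b * a * b)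
        = (1 - p) * b' * (b - b * a * b) := by rw [mul_assoc _ (1 - p), hcompl_x]
      _ = (1 - p) - ((1 - p) * a) * b := by
          simp only [mul_sub, mul_assoc, ← mul_assoc b' b, hb', one_mul, mul_one]
      _ = 1 - p := by rw [hcompl_a, zero_mul, sub_zero]

end IsCornerInverse

end CornerInverse

/-- If `L` is a linear idempotent, `T = id - L`, `χ` invertible (inverse `χ'`),
and `A` is the inverse of `L∘χ∘L` on the range of `L`, then `X := χ − χ∘A∘χ`
is the inverse of `T∘χ⁻¹∘T` on the range of `T`. -/
theorem schur_complement_is_transverse_inverse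
    {K V : Type*} [Field K] [AddCommGroup V] [Module K V]
    (L T χ χ' A : V →ₗ[K] V)
    (hL : L ∘ₗ L = L)
    (hT : T = LinearMap.id - L)
    (hχ : χ ∘ₗ χ' = LinearMap.id) (hχ' : χ' ∘ₗ χ = LinearMap.id)
    (hA1 : L ∘ₗ A ∘ₗ L = A)
    (hA2 : A ∘ₗ (L ∘ₗ χ ∘ₗ L) = L)
    (hA3 : (L ∘ₗ χ ∘ₗ L) ∘ₗ A = L) :
    T ∘ₗ (χ - χ ∘ₗ A ∘ₗ χ) ∘ₗ T = χ - χ ∘ₗ A ∘ₗ χ ∧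
    (χ - χ ∘ₗ A ∘ₗ χ) ∘ₗ (T ∘ₗ χ' ∘ₗ T) = T ∧
    (T ∘ₗ χ' ∘ₗ T) ∘ₗ (χ - χ ∘ₗ A ∘ₗ χ) = T := by
  subst hT
  have hX : IsCornerInverse (1 - L) χ' (χ - χ * A * χ) :=
    IsCornerInverse.schur_complement (p := L) hL hχ hχ' ⟨hA1, hA2, hA3⟩
  exact ⟨hX.corner, hX.mul_corner, hX.corner_mul⟩
end

section
/- Let V and W be vector spaces over a field, g : W → V and d : V → W linear maps with d∘g : W → W invertible, L = g∘(d∘g)⁻¹∘d the longitudinal projector on V, and k a nonzero scalar. Let χ̂ : V → V be a linear map and assume the scalar response χ := −k·(d∘χ̂∘g) : W → W is invertible. Then A := −k·(g∘χ⁻¹∘d) : V → V satisfies L∘A∘L = A, A∘(L∘χ̂∘L) = L, and (L∘χ̂∘L)∘A = L; that is, A is the inverse of L∘χ̂∘L on the range of L. -/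
/-!
Since `d ∘ L = d` and `L ∘ g = g`, composing `g ∘ χ⁻¹ ∘ d` with `L ∘ χ̂ ∘ L` collapses the inner
`d ∘ L ∘ χ̂ ∘ L ∘ g` to `d ∘ χ̂ ∘ g`, which cancels against its inverse and leaves `g ∘ (d ∘ g)⁻¹ ∘ d = L`.
The scalar `-k` only moves between `χ⁻¹` and the inverse of `d ∘ χ̂ ∘ g`.
-/

namespace LinearMap

variable {R V W : Type*} [Semiring R] [AddCommMonoid V] [Module R V]
  [AddCommMonoid W] [Module R W]

def IsInverseOn (P B A : V →ₗ[R] V) : Prop :=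
  P ∘ₗ A ∘ₗ P = A ∧ A ∘ₗ (P ∘ₗ B ∘ₗ P) = P ∧ (P ∘ₗ B ∘ₗ P) ∘ₗ A = P

theorem isInverseOn_comp_comp (g : W →ₗ[R] V) (d : V →ₗ[R] W) {e : W →ₗ[R] W}
    (he₁ : (d ∘ₗ g) ∘ₗ e = id) (he₂ : e ∘ₗ (d ∘ₗ g) = id)
    (M : V →ₗ[R] V) {N : W →ₗ[R] W}
    (hN₁ : (d ∘ₗ M ∘ₗ g) ∘ₗ N = id) (hN₂ : N ∘ₗ (d ∘ₗ M ∘ₗ g) = id) :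
    IsInverseOn (g ∘ₗ e ∘ₗ d) M (g ∘ₗ N ∘ₗ d) := by
  have hdge (h : V →ₗ[R] W) : d ∘ₗ g ∘ₗ e ∘ₗ h = h := by
    simpa only [comp_assoc, id_comp] using congrArg (· ∘ₗ h) he₁
  have hedg (h : V →ₗ[R] W) : e ∘ₗ d ∘ₗ g ∘ₗ h = h := by
    simpa only [comp_assoc, id_comp] using congrArg (· ∘ₗ h) he₂
  have hdMgN (h : V →ₗ[R] W) : d ∘ₗ M ∘ₗ g ∘ₗ N ∘ₗ h = h := by
    simpa only [comp_assoc, id_comp] using congrArg (· ∘ₗ h) hN₁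
  have hNdMg (h : V →ₗ[R] W) : N ∘ₗ d ∘ₗ M ∘ₗ g ∘ₗ h = h := by
    simpa only [comp_assoc, id_comp] using congrArg (· ∘ₗ h) hN₂
  refine ⟨?_, ?_, ?_⟩ <;> simp only [comp_assoc, hdge, hedg, hdMgN, hNdMg]

end LinearMap

open LinearMap in
theorem longitudinal_inverse_formula_general
    {K V W : Type*} [Field K] [AddCommGroup V] [Module K V]
    [AddCommGroup W] [Module K W]
    (g : W →ₗ[K] V) (d : V →ₗ[K] W) (e : W →ₗ[K] W)
    (he1 : (d ∘ₗ g) ∘ₗ e = LinearMap.id) (he2 : e ∘ₗ (d ∘ₗ g) = LinearMap.id)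
    (L : V →ₗ[K] V) (hLdef : L = g ∘ₗ e ∘ₗ d)
    (k : K)
    (χt : V →ₗ[K] V) (χ χ' : W →ₗ[K] W)
    (hχdef : χ = -k • (d ∘ₗ χt ∘ₗ g))
    (hχ1 : χ ∘ₗ χ' = LinearMap.id) (hχ2 : χ' ∘ₗ χ = LinearMap.id) :
    L ∘ₗ (-k • (g ∘ₗ χ' ∘ₗ d)) ∘ₗ L = -k • (g ∘ₗ χ' ∘ₗ d) ∧
    (-k • (g ∘ₗ χ' ∘ₗ d)) ∘ₗ (L ∘ₗ χt ∘ₗ L) = L ∧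
    (L ∘ₗ χt ∘ₗ L) ∘ₗ (-k • (g ∘ₗ χ' ∘ₗ d)) = L := by
  subst hLdef hχdef
  have hscale : -k • (g ∘ₗ χ' ∘ₗ d) = g ∘ₗ (-k • χ') ∘ₗ d := by
    rw [smul_comp, comp_smul]
  rw [hscale]
  refine isInverseOn_comp_comp g d he1 he2 χt ?_ ?_
  · rwa [comp_smul, ← smul_comp]
  · rwa [smul_comp, ← comp_smul]

/-- With `g` the gradient, `d` the divergence, `d∘g` invertible (inverse `e`),
`L = g∘(d∘g)⁻¹∘d` the longitudinal projector, `k ≠ 0` a scalar, `χt` a tensor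
kernel whose scalar response `χ = −k·(d∘χt∘g)` is invertible (inverse `χ'`), the
map `A := −k·(g∘χ⁻¹∘d)` is the inverse of `L∘χt∘L` on the range of `L`. -/
theorem longitudinal_inverse_formula
    {K V W : Type*} [Field K] [AddCommGroup V] [Module K V]
    [AddCommGroup W] [Module K W]
    (g : W →ₗ[K] V) (d : V →ₗ[K] W) (e : W →ₗ[K] W)
    (he1 : (d ∘ₗ g) ∘ₗ e = LinearMap.id) (he2 : e ∘ₗ (d ∘ₗ g) = LinearMap.id)
    (L : V →ₗ[K] V) (hLdef : L = g ∘ₗ e ∘ₗ d)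
    (k : K) (hk : k ≠ 0)
    (χt : V →ₗ[K] V) (χ χ' : W →ₗ[K] W)
    (hχdef : χ = -k • (d ∘ₗ χt ∘ₗ g))
    (hχ1 : χ ∘ₗ χ' = LinearMap.id) (hχ2 : χ' ∘ₗ χ = LinearMap.id) :
    L ∘ₗ (-k • (g ∘ₗ χ' ∘ₗ d)) ∘ₗ L = -k • (g ∘ₗ χ' ∘ₗ d) ∧
    (-k • (g ∘ₗ χ' ∘ₗ d)) ∘ₗ (L ∘ₗ χt ∘ₗ L) = L ∧
    (L ∘ₗ χt ∘ₗ L) ∘ₗ (-k • (g ∘ₗ χ' ∘ₗ d)) = L :=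
  longitudinal_inverse_formula_general g d e he1 he2 L hLdef k χt χ χ' hχdef hχ1 hχ2
end

section
/- (Main Lemma.) Let V and W be vector spaces over a field, g : W → V and d : V → W linear maps with d∘g invertible, L = g∘(d∘g)⁻¹∘d, T = id − L, and k a nonzero scalar. Let χ̂ : V → V be an invertible linear map such that χ := −k·(d∘χ̂∘g) : W → W is also invertible. Then X := χ̂ + k·(χ̂∘g∘χ⁻¹∘d∘χ̂) is the inverse of T∘χ̂⁻¹∘T on the range of T; that is, T∘X∘T = X, X∘(T∘χ̂⁻¹∘T) = T, and (T∘χ̂⁻¹∘T)∘X = T. -/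
/-!
Write `X = χt + k • (χt ∘ g ∘ χ' ∘ d ∘ χt)`. Since `k • (d ∘ χt ∘ g) = -χ`, the factor
`d ∘ χt ∘ g` created by composing `X` with `g` on the right, or with `d` on the left, cancels
against `χ'`, so `X ∘ g = 0` and `d ∘ X = 0`; hence `X ∘ T = T ∘ X = X`. Moreover
`X ∘ χt⁻¹ = id + (…) ∘ d` and `χt⁻¹ ∘ X = id + g ∘ (…)`, and the correction terms are killed
by `T`, because `d ∘ T = 0` and `T ∘ g = 0`.
-/

namespace LinearMap

variable {R V W : Type*} [CommRing R] [AddCommGroup V] [Module R V] [AddCommGroup W] [Module R W]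

section Transverse

variable (g : W →ₗ[R] V) (d : V →ₗ[R] W) (e : W →ₗ[R] W)

/-- The transverse projector `id − g ∘ (d ∘ g)⁻¹ ∘ d`, with `e` standing for `(d ∘ g)⁻¹`. -/
def transverse : V →ₗ[R] V := id - g ∘ₗ e ∘ₗ d

variable {g d e}

theorem comp_transverse (he : (d ∘ₗ g) ∘ₗ e = id) : d ∘ₗ transverse g d e = 0 := by
  rw [transverse, comp_sub, comp_id, ← comp_assoc, ← comp_assoc, he, id_comp, sub_self]

theorem transverse_comp (he : e ∘ₗ (d ∘ₗ g) = id) : transverse g d e ∘ₗ g = 0 := by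
  rw [transverse, sub_comp, id_comp, comp_assoc, comp_assoc, he, comp_id, sub_self]

theorem comp_transverse_of_comp_eq_zero {U : Type*} [AddCommGroup U] [Module R U]
    {X : V →ₗ[R] U} (hX : X ∘ₗ g = 0) : X ∘ₗ transverse g d e = X := by
  rw [transverse, comp_sub, comp_id, ← comp_assoc, hX, zero_comp, sub_zero]

theorem transverse_comp_of_comp_eq_zero {U : Type*} [AddCommGroup U] [Module R U]
    {X : U →ₗ[R] V} (hX : d ∘ₗ X = 0) : transverse g d e ∘ₗ X = X := by
  rw [transverse, sub_comp, id_comp, comp_assoc, comp_assoc, hX, comp_zero, comp_zero, sub_zero]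

theorem id_add_comp_comp_transverse (he : (d ∘ₗ g) ∘ₗ e = id) (M : W →ₗ[R] V) :
    (id + M ∘ₗ d) ∘ₗ transverse g d e = transverse g d e := by
  rw [add_comp, id_comp, comp_assoc, comp_transverse he, comp_zero, add_zero]

theorem transverse_comp_id_add_comp (he : e ∘ₗ (d ∘ₗ g) = id) (M : V →ₗ[R] W) :
    transverse g d e ∘ₗ (id + g ∘ₗ M) = transverse g d e := by
  rw [comp_add, comp_id, ← comp_assoc, transverse_comp he, zero_comp, add_zero]

end Transverse

section Kernel

variable {g : W →ₗ[R] V} {d : V →ₗ[R] W} {k : R} {χt χt' : V →ₗ[R] V} {χ χ' : W →ₗ[R] W}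

theorem kernel_inverse_comp_eq_zero (hχ : χ = -k • (d ∘ₗ χt ∘ₗ g)) (hχ' : χ' ∘ₗ χ = id) :
    (χt + k • (χt ∘ₗ g ∘ₗ χ' ∘ₗ d ∘ₗ χt)) ∘ₗ g = 0 := by
  have hkχ : k • (d ∘ₗ χt ∘ₗ g) = -χ := by rw [hχ, neg_smul, neg_neg]
  calc (χt + k • (χt ∘ₗ g ∘ₗ χ' ∘ₗ d ∘ₗ χt)) ∘ₗ g
      = χt ∘ₗ g + χt ∘ₗ g ∘ₗ χ' ∘ₗ (k • (d ∘ₗ χt ∘ₗ g)) := by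
        simp only [add_comp, smul_comp, comp_smul, comp_assoc]
    _ = 0 := by
        rw [hkχ, comp_neg, comp_neg, hχ', comp_id, comp_neg, add_neg_cancel]

theorem comp_kernel_inverse_eq_zero (hχ : χ = -k • (d ∘ₗ χt ∘ₗ g)) (hχ' : χ ∘ₗ χ' = id) :
    d ∘ₗ (χt + k • (χt ∘ₗ g ∘ₗ χ' ∘ₗ d ∘ₗ χt)) = 0 := by
  have hkχ : k • (d ∘ₗ χt ∘ₗ g) = -χ := by rw [hχ, neg_smul, neg_neg]
  calc d ∘ₗ (χt + k • (χt ∘ₗ g ∘ₗ χ' ∘ₗ d ∘ₗ χt))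
      = d ∘ₗ χt + (k • (d ∘ₗ χt ∘ₗ g)) ∘ₗ χ' ∘ₗ d ∘ₗ χt := by
        simp only [comp_add, smul_comp, comp_smul, comp_assoc]
    _ = 0 := by
        rw [hkχ, neg_comp, ← comp_assoc, hχ', id_comp, add_neg_cancel]

theorem kernel_inverse_comp_inverse (hχt : χt ∘ₗ χt' = id) :
    (χt + k • (χt ∘ₗ g ∘ₗ χ' ∘ₗ d ∘ₗ χt)) ∘ₗ χt' = id + (k • (χt ∘ₗ g ∘ₗ χ')) ∘ₗ d := by
  simp only [add_comp, smul_comp, comp_assoc, hχt, comp_id]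

theorem inverse_comp_kernel_inverse (hχt : χt' ∘ₗ χt = id) :
    χt' ∘ₗ (χt + k • (χt ∘ₗ g ∘ₗ χ' ∘ₗ d ∘ₗ χt)) = id + g ∘ₗ (k • (χ' ∘ₗ d ∘ₗ χt)) := by
  rw [comp_add, comp_smul, comp_smul, hχt, ← comp_assoc, hχt, id_comp]

end Kernel

end LinearMap

open LinearMap in
theorem main_lemma_transverse_inverse_general
    {K V W : Type*} [Field K] [AddCommGroup V] [Module K V]
    [AddCommGroup W] [Module K W]
    (g : W →ₗ[K] V) (d : V →ₗ[K] W) (e : W →ₗ[K] W)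
    (he1 : (d ∘ₗ g) ∘ₗ e = LinearMap.id) (he2 : e ∘ₗ (d ∘ₗ g) = LinearMap.id)
    (L T : V →ₗ[K] V) (hLdef : L = g ∘ₗ e ∘ₗ d) (hT : T = LinearMap.id - L)
    (k : K)
    (χt χt' : V →ₗ[K] V)
    (hχt1 : χt ∘ₗ χt' = LinearMap.id) (hχt2 : χt' ∘ₗ χt = LinearMap.id)
    (χ χ' : W →ₗ[K] W)
    (hχdef : χ = -k • (d ∘ₗ χt ∘ₗ g))
    (hχ1 : χ ∘ₗ χ' = LinearMap.id) (hχ2 : χ' ∘ₗ χ = LinearMap.id) :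
    T ∘ₗ (χt + k • (χt ∘ₗ g ∘ₗ χ' ∘ₗ d ∘ₗ χt)) ∘ₗ T
        = χt + k • (χt ∘ₗ g ∘ₗ χ' ∘ₗ d ∘ₗ χt) ∧
    (χt + k • (χt ∘ₗ g ∘ₗ χ' ∘ₗ d ∘ₗ χt)) ∘ₗ (T ∘ₗ χt' ∘ₗ T) = T ∧
    (T ∘ₗ χt' ∘ₗ T) ∘ₗ (χt + k • (χt ∘ₗ g ∘ₗ χ' ∘ₗ d ∘ₗ χt)) = T := by
  obtain rfl : T = transverse g d e := by rw [hT, hLdef, transverse]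
  set X := χt + k • (χt ∘ₗ g ∘ₗ χ' ∘ₗ d ∘ₗ χt)
  have hXT : X ∘ₗ transverse g d e = X :=
    comp_transverse_of_comp_eq_zero (kernel_inverse_comp_eq_zero hχdef hχ2)
  have hTX : transverse g d e ∘ₗ X = X :=
    transverse_comp_of_comp_eq_zero (comp_kernel_inverse_eq_zero hχdef hχ1)
  refine ⟨by rw [hXT, hTX], ?_, ?_⟩
  · rw [← comp_assoc, ← comp_assoc, hXT, kernel_inverse_comp_inverse hχt1,
      id_add_comp_comp_transverse he1]
  · rw [comp_assoc, comp_assoc, hTX, inverse_comp_kernel_inverse hχt2,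
      transverse_comp_id_add_comp he2]

/-- Main Lemma (Eq. (3) of the paper). With `g` the gradient, `d` the divergence,
`d∘g` invertible (inverse `e`), `L = g∘(d∘g)⁻¹∘d`, `T = id − L`, `k ≠ 0`, and `χt`
an invertible tensor kernel (inverse `χt'`) whose scalar response
`χ = −k·(d∘χt∘g)` is invertible (inverse `χ'`), the map
`X := χt + k·(χt∘g∘χ⁻¹∘d∘χt)` is the inverse of `T∘χt⁻¹∘T` on the range of `T`. -/
theorem main_lemma_transverse_inverse
    {K V W : Type*} [Field K] [AddCommGroup V] [Module K V]
    [AddCommGroup W] [Module K W]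
    (g : W →ₗ[K] V) (d : V →ₗ[K] W) (e : W →ₗ[K] W)
    (he1 : (d ∘ₗ g) ∘ₗ e = LinearMap.id) (he2 : e ∘ₗ (d ∘ₗ g) = LinearMap.id)
    (L T : V →ₗ[K] V) (hLdef : L = g ∘ₗ e ∘ₗ d) (hT : T = LinearMap.id - L)
    (k : K) (hk : k ≠ 0)
    (χt χt' : V →ₗ[K] V)
    (hχt1 : χt ∘ₗ χt' = LinearMap.id) (hχt2 : χt' ∘ₗ χt = LinearMap.id)
    (χ χ' : W →ₗ[K] W)
    (hχdef : χ = -k • (d ∘ₗ χt ∘ₗ g))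
    (hχ1 : χ ∘ₗ χ' = LinearMap.id) (hχ2 : χ' ∘ₗ χ = LinearMap.id) :
    T ∘ₗ (χt + k • (χt ∘ₗ g ∘ₗ χ' ∘ₗ d ∘ₗ χt)) ∘ₗ T
        = χt + k • (χt ∘ₗ g ∘ₗ χ' ∘ₗ d ∘ₗ χt) ∧
    (χt + k • (χt ∘ₗ g ∘ₗ χ' ∘ₗ d ∘ₗ χt)) ∘ₗ (T ∘ₗ χt' ∘ₗ T) = T ∧
    (T ∘ₗ χt' ∘ₗ T) ∘ₗ (χt + k • (χt ∘ₗ g ∘ₗ χ' ∘ₗ d ∘ₗ χt)) = T :=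
  main_lemma_transverse_inverse_general g d e he1 he2 L T hLdef hT k χt χt' hχt1 hχt2 χ χ' hχdef hχ1
    hχ2
end

section
/- Let V and W be vector spaces over a field of characteristic zero, g : W → V and d : V → W linear maps with d∘g invertible, and k a nonzero scalar. Let χ̂ : V → V be invertible with χ := −k·(d∘χ̂∘g) invertible, and set X := χ̂ + k·(χ̂∘g∘χ⁻¹∘d∘χ̂). Then for every linear map f̂ : V → V, the exact identity holds: −k⁻¹·(d∘g)⁻¹∘d∘( f̂ − f̂∘X∘χ̂⁻¹ − χ̂⁻¹∘X∘f̂ + χ̂⁻¹∘X∘f̂∘X∘χ̂⁻¹ )∘g∘(d∘g)⁻¹ = −k·(χ⁻¹∘d∘χ̂∘f̂∘χ̂∘g∘χ⁻¹). In words: the first-order-in-f̂ part of the exact scalar kernel formula collapses to the simplified kernel formula. -/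
/-!
With `B := k • (g ∘ χ⁻¹ ∘ d)` we have `X = χ̂ + χ̂ B χ̂`, hence `Z := χ̂⁻¹ X = 1 + B χ̂` and
`Y := X χ̂⁻¹ = 1 + χ̂ B`. The bracket `f̂ − f̂ Y − Z f̂ + Z f̂ Y` factors as `(Z − 1) f̂ (Y − 1) = B χ̂ f̂ χ̂ B`.
Since `B` begins with `g` and ends with `d`, the outer `(d∘g)⁻¹ d` and `g (d∘g)⁻¹` cancel against it,
leaving `k² χ⁻¹ d χ̂ f̂ χ̂ g χ⁻¹`, and `−k⁻¹ k² = −k`.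
-/

open LinearMap

theorem sub_sub_add_eq_sub_one_mul_mul_sub_one {R : Type*} [Ring R] (f y z : R) :
    f - f * y - z * f + z * f * y = (z - 1) * f * (y - 1) := by
  noncomm_ring

theorem mul_add_mul_mul_self_of_mul_eq_one {R : Type*} [Ring R] {a a' : R} (h : a' * a = 1)
    (b : R) : a' * (a + a * b * a) = 1 + b * a := by
  rw [mul_add, h, mul_assoc a, ← mul_assoc a', h, one_mul]

theorem add_mul_mul_self_mul_of_mul_eq_one {R : Type*} [Ring R] {a a' : R} (h : a * a' = 1)
    (b : R) : (a + a * b * a) * a' = 1 + a * b := by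
  rw [add_mul, h, mul_assoc _ a, h, mul_one]

theorem comp_sandwich_cancel {K V W W' : Type*} [CommSemiring K]
    [AddCommMonoid V] [Module K V] [AddCommMonoid W] [Module K W] [AddCommMonoid W'] [Module K W']
    {g : W →ₗ[K] V} {d : V →ₗ[K] W'} {e : W' →ₗ[K] W}
    (hleft : e ∘ₗ (d ∘ₗ g) = LinearMap.id) (hright : (d ∘ₗ g) ∘ₗ e = LinearMap.id)
    (h : W' →ₗ[K] W) : e ∘ₗ d ∘ₗ (g ∘ₗ h ∘ₗ d) ∘ₗ g ∘ₗ e = h := by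
  calc e ∘ₗ d ∘ₗ (g ∘ₗ h ∘ₗ d) ∘ₗ g ∘ₗ e = (e ∘ₗ (d ∘ₗ g)) ∘ₗ h ∘ₗ ((d ∘ₗ g) ∘ₗ e) := by
        simp only [comp_assoc]
    _ = h := by rw [hleft, hright, id_comp, comp_id]

theorem first_order_exact_formula_collapses_general
    {K V W : Type*} [Field K] [AddCommGroup V] [Module K V]
    [AddCommGroup W] [Module K W]
    (g : W →ₗ[K] V) (d : V →ₗ[K] W) (e : W →ₗ[K] W)
    (he1 : (d ∘ₗ g) ∘ₗ e = LinearMap.id) (he2 : e ∘ₗ (d ∘ₗ g) = LinearMap.id)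
    (k : K)
    (χt χt' : V →ₗ[K] V)
    (hχt1 : χt ∘ₗ χt' = LinearMap.id) (hχt2 : χt' ∘ₗ χt = LinearMap.id)
    (χ' : W →ₗ[K] W)
    (X : V →ₗ[K] V) (hX : X = χt + k • (χt ∘ₗ g ∘ₗ χ' ∘ₗ d ∘ₗ χt))
    (ft : V →ₗ[K] V) :
    -k⁻¹ • (e ∘ₗ d ∘ₗ (ft - ft ∘ₗ X ∘ₗ χt' - χt' ∘ₗ X ∘ₗ ft
        + χt' ∘ₗ X ∘ₗ ft ∘ₗ X ∘ₗ χt') ∘ₗ g ∘ₗ e)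
      = -k • (χ' ∘ₗ d ∘ₗ χt ∘ₗ ft ∘ₗ χt ∘ₗ g ∘ₗ χ') := by
  set B : Module.End K V := k • (g ∘ₗ χ' ∘ₗ d)
  have hXB : X = χt + χt * B * χt := by
    simp only [hX, B, Module.End.mul_eq_comp, comp_smul, smul_comp, comp_assoc]
  have hZ : χt' * X = 1 + B * χt := hXB ▸ mul_add_mul_mul_self_of_mul_eq_one hχt2 B
  have hY : X * χt' = 1 + χt * B := hXB ▸ add_mul_mul_self_mul_of_mul_eq_one hχt1 B
  have hbracket : ft - ft ∘ₗ X ∘ₗ χt' - χt' ∘ₗ X ∘ₗ ft + χt' ∘ₗ X ∘ₗ ft ∘ₗ X ∘ₗ χt'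
      = g ∘ₗ ((k * k) • (χ' ∘ₗ d ∘ₗ χt ∘ₗ ft ∘ₗ χt ∘ₗ g ∘ₗ χ')) ∘ₗ d := by
    have hfactor : ft - ft * (X * χt') - χt' * X * ft + χt' * X * ft * (X * χt')
        = B * χt * ft * (χt * B) := by
      rw [sub_sub_add_eq_sub_one_mul_mul_sub_one, hZ, hY, add_sub_cancel_left, add_sub_cancel_left]
    simp only [Module.End.mul_eq_comp, comp_assoc] at hfactor
    rw [hfactor]
    simp only [B, mul_smul, comp_smul, smul_comp, comp_assoc]
  rw [hbracket, comp_sandwich_cancel he2 he1, smul_smul, neg_mul, ← mul_assoc, inv_mul_mul_self]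

/-- The first-order-in-`ft` part of the exact scalar kernel formula (Eq. (1))
collapses to the simplified kernel formula (Eq. (2)):
`−k⁻¹·(d∘g)⁻¹∘d∘(ft − ft∘X∘χt⁻¹ − χt⁻¹∘X∘ft + χt⁻¹∘X∘ft∘X∘χt⁻¹)∘g∘(d∘g)⁻¹
  = −k·(χ⁻¹∘d∘χt∘ft∘χt∘g∘χ⁻¹)`
where `X := χt + k·(χt∘g∘χ⁻¹∘d∘χt)`. -/
theorem first_order_exact_formula_collapses
    {K V W : Type*} [Field K] [CharZero K] [AddCommGroup V] [Module K V]
    [AddCommGroup W] [Module K W]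
    (g : W →ₗ[K] V) (d : V →ₗ[K] W) (e : W →ₗ[K] W)
    (he1 : (d ∘ₗ g) ∘ₗ e = LinearMap.id) (he2 : e ∘ₗ (d ∘ₗ g) = LinearMap.id)
    (k : K) (hk : k ≠ 0)
    (χt χt' : V →ₗ[K] V)
    (hχt1 : χt ∘ₗ χt' = LinearMap.id) (hχt2 : χt' ∘ₗ χt = LinearMap.id)
    (χ χ' : W →ₗ[K] W)
    (hχdef : χ = -k • (d ∘ₗ χt ∘ₗ g))
    (hχ1 : χ ∘ₗ χ' = LinearMap.id) (hχ2 : χ' ∘ₗ χ = LinearMap.id)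
    (X : V →ₗ[K] V) (hX : X = χt + k • (χt ∘ₗ g ∘ₗ χ' ∘ₗ d ∘ₗ χt))
    (ft : V →ₗ[K] V) :
    -k⁻¹ • (e ∘ₗ d ∘ₗ (ft - ft ∘ₗ X ∘ₗ χt' - χt' ∘ₗ X ∘ₗ ft
        + χt' ∘ₗ X ∘ₗ ft ∘ₗ X ∘ₗ χt') ∘ₗ g ∘ₗ e)
      = -k • (χ' ∘ₗ d ∘ₗ χt ∘ₗ ft ∘ₗ χt ∘ₗ g ∘ₗ χ') :=
  first_order_exact_formula_collapses_general g d e he1 he2 k χt χt' hχt1 hχt2 χ' X hX ft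
end

section
/- (Main result.) Let V and W be finite-dimensional real normed vector spaces, g : W → V and d : V → W linear maps with d∘g invertible, L = g∘(d∘g)⁻¹∘d, T = id − L, and k a nonzero real number. Let χ̂ : V → V be invertible with χ := −k·(d∘χ̂∘g) invertible, and let f̂ : V → V be any linear map. Let Y be a function from a neighborhood of 0 in ℝ to the endomorphisms of V such that for each t, Y(t) is the inverse of T∘(χ̂⁻¹ − t·f̂)∘T on the range of T, and define the scalar kernel F(t) := −k⁻¹·(d∘g)⁻¹∘d∘( t·f̂ + (χ̂⁻¹ − t·f̂)∘Y(t)∘(χ̂⁻¹ − t·f̂) − χ̂⁻¹∘Y(0)∘χ̂⁻¹ )∘g∘(d∘g)⁻¹ : W → W. Then F(0) = 0 and F is differentiable at t = 0 with derivative F′(0) = −k·(χ⁻¹∘d∘χ̂∘f̂∘χ̂∘g∘χ⁻¹). -/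
/-!
Write `M = T f̂ T`. The second resolvent identity for inverses on the range of `T` gives
`Y t - Y 0 = t • Y t M Y 0`; this makes `Y` continuous at `0` and writes the bracket in `F t`
as `t • G t` with `G` continuous at `0`, so `F′(0) = -k⁻¹ (dg)⁻¹ d (G 0) g (dg)⁻¹`. Because
`Y 0` lives on the range of `T`, `G 0 = (1 - χ̂⁻¹ Y 0) f̂ (1 - Y 0 χ̂⁻¹)`, and its outer factors
vanish on the range of `T`, hence factor through `L = g (dg)⁻¹ d`, where `d χ̂ g = -k⁻¹ χ`
turns them into `-k χ⁻¹ d χ̂` and `-k χ̂ g χ⁻¹`.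
-/

open ContinuousLinearMap Filter Topology

section InverseOnRange

variable {R : Type*} [Ring R]

structure IsInverseOnRange (p b y : R) : Prop where
  compress : p * y * p = y
  inv_mul : y * (p * b * p) = p
  mul_inv : p * b * p * y = p

namespace IsInverseOnRange

variable {p b b₀ y y₀ : R}

theorem mul_proj (h : IsInverseOnRange p b y) (hp : IsIdempotentElem p) : y * p = y := by
  conv_lhs => rw [← h.compress]
  rw [mul_assoc, hp.eq, h.compress]

theorem proj_mul (h : IsInverseOnRange p b y) (hp : IsIdempotentElem p) : p * y = y := by
  conv_lhs => rw [← h.compress]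
  rw [← mul_assoc, ← mul_assoc, hp.eq, h.compress]

theorem sub_eq (h : IsInverseOnRange p b y) (h₀ : IsInverseOnRange p b₀ y₀)
    (hp : IsIdempotentElem p) : y - y₀ = y * (p * (b₀ - b) * p) * y₀ := by
  rw [mul_sub, sub_mul, mul_sub, sub_mul, mul_assoc y (p * b₀ * p), h₀.mul_inv, h.inv_mul,
    h.mul_proj hp, h₀.proj_mul hp]

theorem proj_mul_one_sub (h : IsInverseOnRange p b y) (hp : IsIdempotentElem p) :
    p * (1 - b * y) = 0 := by
  rw [mul_sub, mul_one, ← h.proj_mul hp, ← mul_assoc, ← mul_assoc, h.mul_inv, sub_self]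

theorem one_sub_mul_proj (h : IsInverseOnRange p b y) (hp : IsIdempotentElem p) :
    (1 - y * b) * p = 0 := by
  rw [sub_mul, one_mul, ← h.mul_proj hp, mul_assoc, mul_assoc, ← mul_assoc p, h.inv_mul, sub_self]

theorem first_order_coeff_eq (h₀ : IsInverseOnRange p b y₀) (hp : IsIdempotentElem p) (f : R) :
    f + b * (y₀ * (p * f * p) * y₀) * b - f * y₀ * b - b * y₀ * f
      = (1 - b * y₀) * f * (1 - y₀ * b) := by
  have : y₀ * (p * f * p) * y₀ = y₀ * f * y₀ := by
    rw [← mul_assoc, ← mul_assoc, h₀.mul_proj hp, mul_assoc, h₀.proj_mul hp]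
  rw [this]
  noncomm_ring

end IsInverseOnRange

theorem sandwich_sub_sandwich_eq_smul {𝕜 : Type*} [CommRing 𝕜] [Algebra 𝕜 R]
    (t : 𝕜) (a f y₀ z : R) :
    t • f + (a - t • f) * (y₀ + t • z) * (a - t • f) - a * y₀ * a
      = t • (f + (a - t • f) * z * (a - t • f) - f * y₀ * a - a * y₀ * f + t • (f * y₀ * f)) := by
  simp only [mul_add, add_mul, mul_sub, sub_mul, smul_mul_assoc, mul_smul_comm, smul_add,
    smul_sub, smul_smul]
  module

end InverseOnRange

theorem continuousAt_of_sub_eq_smul_mul {𝕜 R : Type*} [NormedField 𝕜] [NormedRing R]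
    [NormedAlgebra 𝕜 R] {y : 𝕜 → R} {n : R}
    (h : ∀ᶠ t in 𝓝 0, y t - y 0 = t • (y t * n)) : ContinuousAt y 0 := by
  have hsmall : ∀ᶠ t : 𝕜 in 𝓝 0, ‖t‖ * ‖n‖ ≤ 1 / 2 :=
    ((continuous_norm.mul continuous_const).tendsto' (0 : 𝕜) 0 (by simp)).eventually
      (Iic_mem_nhds (by norm_num))
  have hle : ∀ᶠ t in 𝓝 0, ‖y t - y 0‖ ≤ ‖t‖ * (‖y t‖ * ‖n‖) := h.mono fun t ht => by
    rw [ht, norm_smul]; gcongr; exact norm_mul_le _ _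
  have hbdd : ∀ᶠ t in 𝓝 0, ‖y t - y 0‖ ≤ ‖t‖ * (2 * ‖y 0‖ * ‖n‖) := by
    filter_upwards [hsmall, hle] with t hs hl
    have hyt : ‖y t‖ ≤ 2 * ‖y 0‖ := by
      nlinarith [norm_sub_norm_le (y t) (y 0), norm_nonneg (y t)]
    calc ‖y t - y 0‖ ≤ ‖t‖ * (‖y t‖ * ‖n‖) := hl
      _ ≤ ‖t‖ * (2 * ‖y 0‖ * ‖n‖) := by gcongr
  rw [ContinuousAt, tendsto_iff_norm_sub_tendsto_zero]
  refine squeeze_zero' (Eventually.of_forall fun _ => norm_nonneg _) hbdd ?_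
  exact (continuous_norm.mul continuous_const).tendsto' (0 : 𝕜) 0 (by simp)

theorem hasDerivAt_zero_of_eq_smul {𝕜 E : Type*} [NontriviallyNormedField 𝕜]
    [NormedAddCommGroup E] [NormedSpace 𝕜 E] {F H : 𝕜 → E}
    (hF : ∀ᶠ t in 𝓝 0, F t = t • H t) (hH : ContinuousAt H 0) : HasDerivAt F (H 0) 0 := by
  have hF0 : F 0 = 0 := by rw [hF.self_of_nhds, zero_smul]
  rw [hasDerivAt_iff_tendsto_slope_zero]
  refine (hH.tendsto.mono_left nhdsWithin_le_nhds).congr' ?_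
  filter_upwards [nhdsWithin_le_nhds hF, self_mem_nhdsWithin] with t ht ht0
  rw [zero_add, ht, hF0, sub_zero, inv_smul_smul₀ ht0]

section Projectors

variable {V W : Type*} [NormedAddCommGroup V] [NormedSpace ℝ V]
  [NormedAddCommGroup W] [NormedSpace ℝ W]
  {g : W →L[ℝ] V} {d : V →L[ℝ] W} {e : W →L[ℝ] W} {T : V →L[ℝ] V}

theorem comp_transverse_eq_zero (he : (d ∘L g) ∘L e = .id ℝ W) (hT : T = .id ℝ V - g ∘L e ∘L d) :
    d ∘L T = 0 := by
  rw [hT, comp_sub, comp_id, ← comp_assoc, ← comp_assoc, he, id_comp, sub_self]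

theorem transverse_comp_eq_zero (he : e ∘L (d ∘L g) = .id ℝ W) (hT : T = .id ℝ V - g ∘L e ∘L d) :
    T ∘L g = 0 := by
  rw [hT, sub_comp, id_comp, comp_assoc, comp_assoc, he, comp_id, sub_self]

theorem isIdempotentElem_transverse (he : (d ∘L g) ∘L e = .id ℝ W)
    (hT : T = .id ℝ V - g ∘L e ∘L d) : IsIdempotentElem T := by
  have hdT := comp_transverse_eq_zero he hT
  show T ∘L T = T
  conv_lhs => enter [1]; rw [hT]
  rw [sub_comp, id_comp, comp_assoc, comp_assoc, hdT, comp_zero, comp_zero, sub_zero]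

variable {k : ℝ} {χt a y₀ : V →L[ℝ] V} {χ χ' : W →L[ℝ] W}

theorem comp_one_sub_mul_eq (he : (d ∘L g) ∘L e = .id ℝ W) (hT : T = .id ℝ V - g ∘L e ∘L d)
    (hTT : IsIdempotentElem T) (hy₀ : IsInverseOnRange T a y₀) (hχt : χt * a = 1)
    (hχ : χ = -k • (d ∘L χt ∘L g)) (hχ' : χ' ∘L χ = .id ℝ W) :
    e ∘L d ∘L (1 - a * y₀) = -k • (χ' ∘L d ∘L χt) := by
  have hdT := comp_transverse_eq_zero he hT
  have hX : g ∘L e ∘L d ∘L (1 - a * y₀) = 1 - a * y₀ := by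
    have hTX := hy₀.proj_mul_one_sub hTT
    rw [hT, ← one_def, sub_mul, one_mul, sub_eq_zero] at hTX
    exact hTX.symm
  have hdy₀ : d ∘L y₀ = 0 := by
    rw [← hy₀.proj_mul hTT, mul_def, ← comp_assoc, hdT, zero_comp]
  have hdX : d ∘L χt ∘L (1 - a * y₀) = d ∘L χt := by
    rw [← mul_def χt, mul_sub, mul_one, ← mul_assoc, hχt, one_mul, comp_sub, hdy₀, sub_zero]
  calc e ∘L d ∘L (1 - a * y₀) = χ' ∘L χ ∘L e ∘L d ∘L (1 - a * y₀) := by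
        rw [← comp_assoc χ', hχ', id_comp]
    _ = -k • (χ' ∘L d ∘L χt ∘L g ∘L e ∘L d ∘L (1 - a * y₀)) := by
        rw [hχ]; simp only [smul_comp, comp_smul, comp_assoc]
    _ = -k • (χ' ∘L d ∘L χt) := by rw [hX, hdX]

theorem one_sub_mul_comp_eq (he : e ∘L (d ∘L g) = .id ℝ W) (hT : T = .id ℝ V - g ∘L e ∘L d)
    (hTT : IsIdempotentElem T) (hy₀ : IsInverseOnRange T a y₀) (hχt : a * χt = 1)
    (hχ : χ = -k • (d ∘L χt ∘L g)) (hχ' : χ ∘L χ' = .id ℝ W) :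
    (1 - y₀ * a) ∘L g ∘L e = -k • (χt ∘L g ∘L χ') := by
  have hTg := transverse_comp_eq_zero he hT
  have hX : (1 - y₀ * a) ∘L g ∘L e ∘L d = 1 - y₀ * a := by
    have hXT := hy₀.one_sub_mul_proj hTT
    rw [hT, ← one_def, mul_sub, mul_one, sub_eq_zero] at hXT
    exact hXT.symm
  have hy₀g : y₀ ∘L g = 0 := by
    rw [← hy₀.mul_proj hTT, mul_def, comp_assoc, hTg, comp_zero]
  have hXg : (1 - y₀ * a) ∘L χt ∘L g ∘L χ' = χt ∘L g ∘L χ' := by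
    rw [← comp_assoc, ← mul_def, sub_mul, one_mul, mul_assoc, hχt, mul_one, sub_comp,
      ← comp_assoc y₀, hy₀g, zero_comp, sub_zero]
  calc (1 - y₀ * a) ∘L g ∘L e = (1 - y₀ * a) ∘L g ∘L e ∘L χ ∘L χ' := by
        rw [hχ', comp_id]
    _ = -k • ((1 - y₀ * a) ∘L g ∘L e ∘L d ∘L χt ∘L g ∘L χ') := by
        rw [hχ]; simp only [smul_comp, comp_smul, comp_assoc]
    _ = -k • (χt ∘L g ∘L χ') := by
        rw [show (1 - y₀ * a) ∘L g ∘L e ∘L d ∘L χt ∘L g ∘L χ'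
            = ((1 - y₀ * a) ∘L g ∘L e ∘L d) ∘L χt ∘L g ∘L χ' by simp only [comp_assoc],
          hX, hXg]

theorem project_first_order_coeff_eq (he₁ : (d ∘L g) ∘L e = .id ℝ W)
    (he₂ : e ∘L (d ∘L g) = .id ℝ W) (hT : T = .id ℝ V - g ∘L e ∘L d) (hTT : IsIdempotentElem T)
    (hy₀ : IsInverseOnRange T a y₀) (hk : k ≠ 0) (hχt₁ : χt * a = 1) (hχt₂ : a * χt = 1)
    (hχ : χ = -k • (d ∘L χt ∘L g)) (hχ₁ : χ ∘L χ' = .id ℝ W) (hχ₂ : χ' ∘L χ = .id ℝ W)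
    (f : V →L[ℝ] V) :
    -k⁻¹ • (e ∘L d ∘L ((1 - a * y₀) * f * (1 - y₀ * a)) ∘L g ∘L e)
      = -k • (χ' ∘L d ∘L χt ∘L f ∘L χt ∘L g ∘L χ') := by
  rw [show e ∘L d ∘L ((1 - a * y₀) * f * (1 - y₀ * a)) ∘L g ∘L e
      = (e ∘L d ∘L (1 - a * y₀)) ∘L f ∘L ((1 - y₀ * a) ∘L g ∘L e) by
        simp only [mul_def, comp_assoc],
    comp_one_sub_mul_eq he₁ hT hTT hy₀ hχt₁ hχ hχ₂, one_sub_mul_comp_eq he₂ hT hTT hy₀ hχt₂ hχ hχ₁]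
  simp only [smul_comp, comp_smul, smul_smul, comp_assoc]
  congr 1
  field_simp

end Projectors

theorem main_result_simplified_kernel_general
    {V W : Type*} [NormedAddCommGroup V] [NormedSpace ℝ V]
    [NormedAddCommGroup W] [NormedSpace ℝ W]
    (g : W →L[ℝ] V) (d : V →L[ℝ] W) (e : W →L[ℝ] W)
    (he1 : (d ∘L g) ∘L e = ContinuousLinearMap.id ℝ W)
    (he2 : e ∘L (d ∘L g) = ContinuousLinearMap.id ℝ W)
    (L T : V →L[ℝ] V)
    (hLdef : L = g ∘L e ∘L d)
    (hT : T = ContinuousLinearMap.id ℝ V - L)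
    (k : ℝ) (hk : k ≠ 0)
    (χt χt' : V →L[ℝ] V)
    (hχt1 : χt ∘L χt' = ContinuousLinearMap.id ℝ V)
    (hχt2 : χt' ∘L χt = ContinuousLinearMap.id ℝ V)
    (χ χ' : W →L[ℝ] W)
    (hχdef : χ = -k • (d ∘L χt ∘L g))
    (hχ1 : χ ∘L χ' = ContinuousLinearMap.id ℝ W)
    (hχ2 : χ' ∘L χ = ContinuousLinearMap.id ℝ W)
    (ft : V →L[ℝ] V)
    (Y : ℝ → (V →L[ℝ] V)) (s : Set ℝ) (hs : s ∈ nhds (0 : ℝ))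
    (hY : ∀ t ∈ s,
      T ∘L Y t ∘L T = Y t ∧
      Y t ∘L (T ∘L (χt' - t • ft) ∘L T) = T ∧
      (T ∘L (χt' - t • ft) ∘L T) ∘L Y t = T)
    (F : ℝ → (W →L[ℝ] W))
    (hF : ∀ t : ℝ, F t =
      -k⁻¹ • (e ∘L d ∘L
        (t • ft + (χt' - t • ft) ∘L Y t ∘L (χt' - t • ft) - χt' ∘L Y 0 ∘L χt')
        ∘L g ∘L e)) :
    F 0 = 0 ∧ HasDerivAt F (-k • (χ' ∘L d ∘L χt ∘L ft ∘L χt ∘L g ∘L χ')) 0 := by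
  rw [hLdef] at hT
  have hTT := isIdempotentElem_transverse he1 hT
  have hYinv : ∀ t ∈ s, IsInverseOnRange T (χt' - t • ft) (Y t) := fun t ht => by
    obtain ⟨h₁, h₂, h₃⟩ := hY t ht
    exact ⟨by simpa only [← mul_def, mul_assoc] using h₁,
      by simpa only [← mul_def, mul_assoc] using h₂, by simpa only [← mul_def, mul_assoc] using h₃⟩
  have hY₀ : IsInverseOnRange T χt' (Y 0) := by
    simpa using hYinv 0 (mem_of_mem_nhds hs)
  have hres : ∀ t ∈ s, Y t - Y 0 = t • (Y t * (T * ft * T) * Y 0) := fun t ht => by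
    rw [(hYinv t ht).sub_eq hY₀ hTT]
    simp only [sub_sub_cancel, mul_smul_comm, smul_mul_assoc]
  set G : ℝ → V →L[ℝ] V := fun t =>
    ft + (χt' - t • ft) * (Y t * (T * ft * T) * Y 0) * (χt' - t • ft)
      - ft * Y 0 * χt' - χt' * Y 0 * ft + t • (ft * Y 0 * ft) with hG
  have hFG : ∀ t ∈ s, F t = t • (-k⁻¹ • (e ∘L d ∘L G t ∘L g ∘L e)) := fun t ht => by
    have hK := sandwich_sub_sandwich_eq_smul t χt' ft (Y 0) (Y t * (T * ft * T) * Y 0)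
    rw [← sub_eq_iff_eq_add'.mp (hres t ht)] at hK
    simp only [mul_def, comp_assoc] at hK
    rw [hF t, hK, smul_comp, comp_smul, comp_smul, smul_comm]
    rfl
  have hYc : ContinuousAt Y 0 := continuousAt_of_sub_eq_smul_mul (n := T * ft * T * Y 0)
    (eventually_of_mem hs fun t ht => by rw [← mul_assoc, hres t ht])
  have hG0 : -k⁻¹ • (e ∘L d ∘L G 0 ∘L g ∘L e) = -k • (χ' ∘L d ∘L χt ∘L ft ∘L χt ∘L g ∘L χ') := by
    have hfactor : G 0 = (1 - χt' * Y 0) * ft * (1 - Y 0 * χt') := by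
      simpa only [hG, zero_smul, sub_zero, add_zero] using hY₀.first_order_coeff_eq hTT ft
    rw [hfactor]
    exact project_first_order_coeff_eq he1 he2 hT hTT hY₀ hk hχt1 hχt2 hχdef hχ1 hχ2 ft
  have hderiv := hasDerivAt_zero_of_eq_smul (H := fun t => -k⁻¹ • (e ∘L d ∘L G t ∘L g ∘L e))
    (eventually_of_mem hs hFG) (by fun_prop)
  exact ⟨by simp [hF], hG0 ▸ hderiv⟩

/-- Main result (Eq. (2) of the paper). Let `F t` be the exact scalar xc kernel
(Eq. (1)) generated by the tensor kernel `t·ft`. Then `F 0 = 0` and `F` is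
differentiable at `t = 0` with derivative
`F′(0) = −k·(χ⁻¹∘d∘χt∘ft∘χt∘g∘χ⁻¹)` — the simplified scalar–tensor relation. -/
theorem main_result_simplified_kernel
    {V W : Type*} [NormedAddCommGroup V] [NormedSpace ℝ V] [FiniteDimensional ℝ V]
    [NormedAddCommGroup W] [NormedSpace ℝ W] [FiniteDimensional ℝ W]
    (g : W →L[ℝ] V) (d : V →L[ℝ] W) (e : W →L[ℝ] W)
    (he1 : (d ∘L g) ∘L e = ContinuousLinearMap.id ℝ W)
    (he2 : e ∘L (d ∘L g) = ContinuousLinearMap.id ℝ W)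
    (L T : V →L[ℝ] V)
    (hLdef : L = g ∘L e ∘L d)
    (hT : T = ContinuousLinearMap.id ℝ V - L)
    (k : ℝ) (hk : k ≠ 0)
    (χt χt' : V →L[ℝ] V)
    (hχt1 : χt ∘L χt' = ContinuousLinearMap.id ℝ V)
    (hχt2 : χt' ∘L χt = ContinuousLinearMap.id ℝ V)
    (χ χ' : W →L[ℝ] W)
    (hχdef : χ = -k • (d ∘L χt ∘L g))
    (hχ1 : χ ∘L χ' = ContinuousLinearMap.id ℝ W)
    (hχ2 : χ' ∘L χ = ContinuousLinearMap.id ℝ W)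
    (ft : V →L[ℝ] V)
    (Y : ℝ → (V →L[ℝ] V)) (s : Set ℝ) (hs : s ∈ nhds (0 : ℝ))
    (hY : ∀ t ∈ s,
      T ∘L Y t ∘L T = Y t ∧
      Y t ∘L (T ∘L (χt' - t • ft) ∘L T) = T ∧
      (T ∘L (χt' - t • ft) ∘L T) ∘L Y t = T)
    (F : ℝ → (W →L[ℝ] W))
    (hF : ∀ t : ℝ, F t =
      -k⁻¹ • (e ∘L d ∘L
        (t • ft + (χt' - t • ft) ∘L Y t ∘L (χt' - t • ft) - χt' ∘L Y 0 ∘L χt')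
        ∘L g ∘L e)) :
    F 0 = 0 ∧ HasDerivAt F (-k • (χ' ∘L d ∘L χt ∘L ft ∘L χt ∘L g ∘L χ')) 0 :=
  main_result_simplified_kernel_general g d e he1 he2 L T hLdef hT k hk χt χt' hχt1 hχt2 χ χ' hχdef
    hχ1 hχ2 ft Y s hs hY F hF
end

section
/- (Purely longitudinal case.) Let V and W be vector spaces over a field, g : W → V and d : V → W linear maps with d∘g invertible, and k a nonzero scalar. Let χ̂ : V → V be a linear map with χ := −k·(d∘χ̂∘g) invertible. If the tensor kernel is purely longitudinal, f̂ = −k·(g∘φ∘d) for some linear map φ : W → W, then the simplified scalar kernel formula recovers φ exactly: −k·(χ⁻¹∘d∘χ̂∘f̂∘χ̂∘g∘χ⁻¹) = φ. -/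
/-! A longitudinal kernel factors through `d` and `g`, so `d ∘ χ̂ ∘ f̂ ∘ χ̂ ∘ g` regroups as
`χ ∘ φ ∘ χ`, and the two copies of `χ⁻¹` cancel both factors of `χ`. -/

namespace LinearMap

variable {R V W : Type*} [CommSemiring R] [AddCommMonoid V] [Module R V]
  [AddCommMonoid W] [Module R W]

theorem smul_comp_longitudinal_comp (g : W →ₗ[R] V) (d : V →ₗ[R] W) (χt : V →ₗ[R] V)
    (φ ψ : W →ₗ[R] W) (a : R) :
    a • (ψ ∘ₗ d ∘ₗ χt ∘ₗ (a • (g ∘ₗ φ ∘ₗ d)) ∘ₗ χt ∘ₗ g ∘ₗ ψ) =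
      ψ ∘ₗ (a • (d ∘ₗ χt ∘ₗ g)) ∘ₗ φ ∘ₗ (a • (d ∘ₗ χt ∘ₗ g)) ∘ₗ ψ := by
  ext w
  simp only [smul_apply, comp_apply, map_smul, smul_smul]

theorem comp_comp_comp_comp_cancel {χ χ' : W →ₗ[R] W} (hχ1 : χ ∘ₗ χ' = id)
    (hχ2 : χ' ∘ₗ χ = id) (φ : W →ₗ[R] W) :
    χ' ∘ₗ χ ∘ₗ φ ∘ₗ χ ∘ₗ χ' = φ := by
  rw [← comp_assoc, hχ2, id_comp, hχ1, comp_id]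

end LinearMap

theorem purely_longitudinal_case_general
    {K V W : Type*} [Field K] [AddCommGroup V] [Module K V]
    [AddCommGroup W] [Module K W]
    (g : W →ₗ[K] V) (d : V →ₗ[K] W)
    (k : K)
    (χt : V →ₗ[K] V) (χ χ' : W →ₗ[K] W)
    (hχdef : χ = -k • (d ∘ₗ χt ∘ₗ g))
    (hχ1 : χ ∘ₗ χ' = LinearMap.id) (hχ2 : χ' ∘ₗ χ = LinearMap.id)
    (φ : W →ₗ[K] W) (ft : V →ₗ[K] V) (hf : ft = -k • (g ∘ₗ φ ∘ₗ d)) :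
    -k • (χ' ∘ₗ d ∘ₗ χt ∘ₗ ft ∘ₗ χt ∘ₗ g ∘ₗ χ') = φ := by
  rw [hf, LinearMap.smul_comp_longitudinal_comp, ← hχdef,
    LinearMap.comp_comp_comp_comp_cancel hχ1 hχ2]

/-- Purely longitudinal case (Eq. (8)): if the tensor kernel is purely
longitudinal, `ft = −k·(g∘φ∘d)`, then the simplified scalar kernel formula
recovers `φ` exactly: `−k·(χ⁻¹∘d∘χt∘ft∘χt∘g∘χ⁻¹) = φ`. -/
theorem purely_longitudinal_case
    {K V W : Type*} [Field K] [AddCommGroup V] [Module K V]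
    [AddCommGroup W] [Module K W]
    (g : W →ₗ[K] V) (d : V →ₗ[K] W) (e : W →ₗ[K] W)
    (he1 : (d ∘ₗ g) ∘ₗ e = LinearMap.id) (he2 : e ∘ₗ (d ∘ₗ g) = LinearMap.id)
    (k : K) (hk : k ≠ 0)
    (χt : V →ₗ[K] V) (χ χ' : W →ₗ[K] W)
    (hχdef : χ = -k • (d ∘ₗ χt ∘ₗ g))
    (hχ1 : χ ∘ₗ χ' = LinearMap.id) (hχ2 : χ' ∘ₗ χ = LinearMap.id)
    (φ : W →ₗ[K] W) (ft : V →ₗ[K] V) (hf : ft = -k • (g ∘ₗ φ ∘ₗ d)) :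
    -k • (χ' ∘ₗ d ∘ₗ χt ∘ₗ ft ∘ₗ χt ∘ₗ g ∘ₗ χ') = φ :=
  purely_longitudinal_case_general g d k χt χ χ' hχdef hχ1 hχ2 φ ft hf
end
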